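/- Invariant interval for the network Fisher–Kolmogorov equation: let L = Deg - A be the graph Laplacian of a finite undirected graph with nonnegative adjacency matrix A, and consider dc/dt = -D L c + α c ⊙ (1 - c) with D, α > 0, where ⊙ is entrywise multiplication. If the initial condition satisfies 0 ≤ cᵢ(0) ≤ 1 for all i, then the solution satisfies 0 ≤ cᵢ(t) ≤ 1 for all i and all t ≥ 0. -/

import Mathlib

open Real Set Filter

lemma max_mul_self' (x : ℝ) : max x 0 * x = max x 0 ^ 2 := by
  rcases le_or_gt x 0 with h | h
  · rw [max_eq_right h]; ring
  · rw [max_eq_left h.le]; ring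

lemma hasDerivAt_sq_max (x : ℝ) :
    HasDerivAt (fun y : ℝ => max y 0 ^ 2) (2 * max x 0) x := by
  rcases lt_trichotomy x 0 with h | h | h
  · have : (fun y : ℝ => max y 0 ^ 2) =ᶠ[nhds x] fun _ => (0:ℝ) := by
      filter_upwards [eventually_lt_nhds h] with y hy
      rw [max_eq_right hy.le]; ring
    rw [max_eq_right h.le]
    simpa using (hasDerivAt_const x (0:ℝ)).congr_of_eventuallyEq this
  · subst h
    rw [max_self, mul_zero]
    rw [hasDerivAt_iff_isLittleO]
    rw [Asymptotics.isLittleO_iff]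
    intro c hc
    have : ∀ᶠ y in nhds (0:ℝ), |y - 0| < c := by
      have := Metric.ball_mem_nhds (0:ℝ) hc
      filter_upwards [this] with y hy
      simpa [Real.dist_eq] using hy
    filter_upwards [this] with y hy
    have h1 : max y 0 ^ 2 ≤ y ^ 2 := by
      rcases le_or_gt y 0 with h' | h'
      · rw [max_eq_right h']
        have : (0:ℝ) ≤ y^2 := sq_nonneg y
        simpa using this
      · rw [max_eq_left h'.le]
    have h2 : (0:ℝ) ≤ max y 0 ^ 2 := by positivity
    simp only [max_self, ne_eq, OfNat.ofNat_ne_zero, not_false_eq_true, zero_pow, sub_zero,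
      smul_eq_mul, mul_zero]
    rw [Real.norm_eq_abs, Real.norm_eq_abs, abs_of_nonneg h2]
    calc max y 0 ^ 2 ≤ y ^ 2 := h1
    _ = |y| * |y| := by rw [abs_mul_abs_self]; ring
    _ ≤ c * |y| := by
        apply mul_le_mul_of_nonneg_right _ (abs_nonneg y)
        simpa using hy.le
  · have : (fun y : ℝ => max y 0 ^ 2) =ᶠ[nhds x] fun y => y ^ 2 := by
      filter_upwards [eventually_gt_nhds h] with y hy
      rw [max_eq_left hy.le]
    rw [max_eq_left h.le]
    have hp := (hasDerivAt_pow 2 x).congr_of_eventuallyEq this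
    simpa [mul_comm] using hp



open Real

/-- Invariant interval for the network Fisher–Kolmogorov equation: for the graph
Laplacian `L = Deg - A` of a finite undirected graph with nonnegative adjacency
matrix `A`, solutions of `dc/dt = -D L c + α c ⊙ (1-c)` with `D, α > 0` and
`0 ≤ cᵢ(0) ≤ 1` satisfy `0 ≤ cᵢ(t) ≤ 1` for all `i` and `t ≥ 0`. -/
theorem stmt14 (N : ℕ) (A : Matrix (Fin N) (Fin N) ℝ)
    (hsym : A.IsSymm) (hpos : ∀ i j, 0 ≤ A i j)
    (D α : ℝ) (hD : 0 < D) (hα : 0 < α)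
    (c : ℝ → Fin N → ℝ)
    (hode : ∀ t : ℝ, ∀ i : Fin N,
      HasDerivAt (fun s => c s i)
        (-D * (∑ j, A i j * (c t i - c t j)) + α * c t i * (1 - c t i)) t)
    (hinit : ∀ i : Fin N, 0 ≤ c 0 i ∧ c 0 i ≤ 1) :
    ∀ t : ℝ, 0 ≤ t → ∀ i : Fin N, 0 ≤ c t i ∧ c t i ≤ 1 := by
  -- notation
  set F : ℝ → Fin N → ℝ := fun t i =>
    -D * (∑ j, A i j * (c t i - c t j)) + α * c t i * (1 - c t i) with hF
  set g : ℝ → Fin N → ℝ := fun t i => max (-(c t i)) 0 with hg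
  set h : ℝ → Fin N → ℝ := fun t i => max (c t i - 1) 0 with hh
  set V : ℝ → ℝ := fun t => ∑ i, (g t i ^ 2 + h t i ^ 2) with hV
  set W : ℝ → ℝ := fun t => ∑ i, (2 * g t i * (-(F t i)) + 2 * h t i * (F t i)) with hW
  have hgnn : ∀ t i, 0 ≤ g t i := fun t i => le_max_right _ _
  have hhnn : ∀ t i, 0 ≤ h t i := fun t i => le_max_right _ _
  have hgle : ∀ t i, -(c t i) ≤ g t i := fun t i => le_max_left _ _
  have hhle : ∀ t i, c t i - 1 ≤ h t i := fun t i => le_max_left _ _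
  have hgu : ∀ t i, g t i * c t i = -(g t i ^ 2) := by
    intro t i
    have := max_mul_self' (-(c t i))
    simp only [hg]
    linear_combination -this
  have hhu : ∀ t i, h t i * (c t i - 1) = h t i ^ 2 := fun t i => max_mul_self' (c t i - 1)
  -- derivative of V
  have hVd : ∀ t, HasDerivAt V (W t) t := by
    intro t
    apply HasDerivAt.fun_sum
    intro i _
    have h1 : HasDerivAt (fun s => g s i ^ 2) (2 * g t i * (-(F t i))) t := by
      have := (hasDerivAt_sq_max (-(c t i))).comp t ((hode t i).neg)
      simpa [hg, hF, Function.comp_def] using this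
    have h2 : HasDerivAt (fun s => h s i ^ 2) (2 * h t i * (F t i)) t := by
      have := (hasDerivAt_sq_max (c t i - 1)).comp t ((hode t i).sub_const 1)
      simpa [hh, hF, Function.comp_def] using this
    exact h1.add h2
  have hVcont : Continuous V := by
    rw [continuous_iff_continuousAt]
    exact fun t => (hVd t).continuousAt
  have hccont : Continuous c := by
    apply continuous_pi
    intro i
    rw [continuous_iff_continuousAt]
    exact fun t => (hode t i).continuousAt
  have hVnn : ∀ t, 0 ≤ V t := by
    intro t
    apply Finset.sum_nonneg
    intro i _
    positivity
  have hV0 : V 0 = 0 := by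
    apply Finset.sum_eq_zero
    intro i _
    have h1 : g 0 i = 0 := max_eq_right (by linarith [(hinit i).1])
    have h2 : h 0 i = 0 := max_eq_right (by linarith [(hinit i).2])
    rw [h1, h2]; ring
  -- total mass of A
  set S : ℝ := ∑ i, ∑ j, A i j with hS
  have hSij : ∀ i j, A i j ≤ S := by
    intro i j
    calc A i j ≤ ∑ j', A i j' :=
          Finset.single_le_sum (fun j' _ => hpos i j') (Finset.mem_univ j)
    _ ≤ S := Finset.single_le_sum
          (fun i' _ => Finset.sum_nonneg fun j' _ => hpos i' j') (Finset.mem_univ i)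
  have hSnn : 0 ≤ S := Finset.sum_nonneg fun i _ => Finset.sum_nonneg fun j _ => hpos i j
  -- main: V vanishes on [0, b]
  have key : ∀ b : ℝ, 0 ≤ b → ∀ x ∈ Icc (0:ℝ) b, V x ≤ 0 := by
    intro b hb
    obtain ⟨C, hC⟩ := isCompact_Icc.exists_bound_of_continuousOn
      (hccont.continuousOn (s := Icc (0:ℝ) b))
    set B : ℝ := max C 0 with hBdef
    have hBnn : 0 ≤ B := le_max_right _ _
    have habs : ∀ s ∈ Icc (0:ℝ) b, ∀ i, |c s i| ≤ B := by
      intro s hs i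
      calc |c s i| = ‖c s i‖ := (Real.norm_eq_abs _).symm
      _ ≤ ‖c s‖ := norm_le_pi_norm (c s) i
      _ ≤ C := hC s hs
      _ ≤ B := le_max_left _ _
    set K : ℝ := 2*D*(N:ℝ)*S + 2*α*(1+B) with hK
    -- the differential inequality
    have bound : ∀ s ∈ Ico (0:ℝ) b, W s ≤ K * V s + 0 := by
      intro s hs
      have hsIcc : s ∈ Icc (0:ℝ) b := Ico_subset_Icc_self hs
      -- pairwise diffusion bound
      have hpair : ∀ i j, 2*(h s i - g s i)*(c s j - c s i) ≤
          g s i^2 + g s j^2 + h s i^2 + h s j^2 := by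
        intro i j
        have e1 : h s i * c s i = h s i^2 + h s i := by linear_combination hhu s i
        have e2 : g s i * c s i = -(g s i^2) := hgu s i
        have b1 : h s i * c s j ≤ h s i * (1 + h s j) :=
          mul_le_mul_of_nonneg_left (by linarith [hhle s j]) (hhnn s i)
        have b2 : g s i * (-(c s j)) ≤ g s i * g s j :=
          mul_le_mul_of_nonneg_left (hgle s j) (hgnn s i)
        nlinarith [sq_nonneg (h s i - h s j), sq_nonneg (g s i - g s j)]
      -- reaction bound
      have hreac : ∀ i, 2*α*((h s i - g s i)*(c s i*(1 - c s i))) ≤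
          2*α*(1+B)*(g s i^2 + h s i^2) := by
        intro i
        have hBi := abs_le.mp (habs s hsIcc i)
        have keyi : (h s i - g s i)*(c s i*(1 - c s i))
            = -(c s i)*h s i^2 + (1 - c s i)*g s i^2 := by
          linear_combination (-(c s i)) * hhu s i - (1 - c s i) * hgu s i
        have h1 : -(c s i) * h s i^2 ≤ B * h s i^2 :=
          mul_le_mul_of_nonneg_right (by linarith [hBi.1]) (sq_nonneg _)
        have h2 : (1 - c s i) * g s i^2 ≤ (1+B) * g s i^2 :=
          mul_le_mul_of_nonneg_right (by linarith [hBi.1]) (sq_nonneg _)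
        calc 2*α*((h s i - g s i)*(c s i*(1 - c s i)))
            = 2*α*(-(c s i)*h s i^2 + (1 - c s i)*g s i^2) := by rw [keyi]
        _ ≤ 2*α*(B*h s i^2 + (1+B)*g s i^2) := by
            apply mul_le_mul_of_nonneg_left (by linarith) (by positivity)
        _ ≤ 2*α*(1+B)*(g s i^2 + h s i^2) := by
            nlinarith [sq_nonneg (h s i), hα.le]
      -- rewrite W s
      have hWi : ∀ i, 2 * g s i * (-(F s i)) + 2 * h s i * (F s i)
          = (∑ j, 2*D*(A i j * ((h s i - g s i)*(c s j - c s i))))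
            + 2*α*((h s i - g s i)*(c s i*(1 - c s i))) := by
        intro i
        have e : (∑ j, 2*D*(A i j * ((h s i - g s i)*(c s j - c s i))))
            = (-(2*D*(h s i - g s i))) * (∑ j, A i j * (c s i - c s j)) := by
          rw [Finset.mul_sum]
          apply Finset.sum_congr rfl
          intro j _; ring
        rw [e, hF]
        ring
      calc W s = ∑ i, ((∑ j, 2*D*(A i j * ((h s i - g s i)*(c s j - c s i))))
            + 2*α*((h s i - g s i)*(c s i*(1 - c s i)))) := by
            rw [hW]; exact Finset.sum_congr rfl (fun i _ => hWi i)
      _ = (∑ i, ∑ j, 2*D*(A i j * ((h s i - g s i)*(c s j - c s i))))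
            + ∑ i, 2*α*((h s i - g s i)*(c s i*(1 - c s i))) := Finset.sum_add_distrib
      _ ≤ (∑ i, ∑ j, D*S*(g s i^2 + g s j^2 + h s i^2 + h s j^2))
            + ∑ i, 2*α*(1+B)*(g s i^2 + h s i^2) := by
          apply add_le_add
          · apply Finset.sum_le_sum; intro i _
            apply Finset.sum_le_sum; intro j _
            have hq := hpair i j
            have hQnn : (0:ℝ) ≤ g s i^2 + g s j^2 + h s i^2 + h s j^2 := by positivity
            calc 2*D*(A i j * ((h s i - g s i)*(c s j - c s i)))
                = D * A i j * (2*(h s i - g s i)*(c s j - c s i)) := by ring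
            _ ≤ D * A i j * (g s i^2 + g s j^2 + h s i^2 + h s j^2) :=
                mul_le_mul_of_nonneg_left hq (mul_nonneg hD.le (hpos i j))
            _ = D * (g s i^2 + g s j^2 + h s i^2 + h s j^2) * A i j := by ring
            _ ≤ D * (g s i^2 + g s j^2 + h s i^2 + h s j^2) * S :=
                mul_le_mul_of_nonneg_left (hSij i j) (mul_nonneg hD.le hQnn)
            _ = D*S*(g s i^2 + g s j^2 + h s i^2 + h s j^2) := by ring
          · exact Finset.sum_le_sum fun i _ => hreac i
      _ = K * V s + 0 := by
          have A1 : ∀ i, (∑ j, D*S*(g s i^2 + g s j^2 + h s i^2 + h s j^2))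
              = D*S*((N:ℝ)*(g s i^2 + h s i^2) + V s) := by
            intro i
            rw [← Finset.mul_sum]
            congr 1
            rw [show (∑ j : Fin N, (g s i^2 + g s j^2 + h s i^2 + h s j^2))
                = ∑ j : Fin N, ((g s i^2 + h s i^2) + (g s j^2 + h s j^2)) from
              Finset.sum_congr rfl (fun j _ => by ring)]
            rw [Finset.sum_add_distrib, Finset.sum_const, Finset.card_univ, Fintype.card_fin,
              nsmul_eq_mul, hV]
          rw [Finset.sum_congr rfl (fun i _ => A1 i)]
          have A2 : (∑ i : Fin N, D*S*((N:ℝ)*(g s i^2 + h s i^2) + V s))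
              = D*S*(N:ℝ)*(V s) + (N:ℝ)*(D*S*(V s)) := by
            rw [show (∑ i : Fin N, D*S*((N:ℝ)*(g s i^2 + h s i^2) + V s))
                = ∑ i : Fin N, (D*S*(N:ℝ)*(g s i^2 + h s i^2) + D*S*(V s)) from
              Finset.sum_congr rfl (fun i _ => by ring)]
            rw [Finset.sum_add_distrib, ← Finset.mul_sum, Finset.sum_const, Finset.card_univ,
              Fintype.card_fin, nsmul_eq_mul, hV]
          rw [A2, ← Finset.mul_sum]
          rw [hK, hV]
          ring
    -- Grönwall
    have hslope : ∀ x ∈ Ico (0:ℝ) b, ∀ r, W x < r →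
        ∃ᶠ z in nhdsWithin x (Ioi x), (z - x)⁻¹ * (V z - V x) < r := by
      intro x _ r hr
      have := ((hVd x).hasDerivWithinAt (s := Ici x)).liminf_right_slope_le hr
      apply this.mono
      intro z hz
      rwa [slope_def_field, div_eq_inv_mul] at hz
    have := le_gronwallBound_of_liminf_deriv_right_le (f' := W) (δ := 0) (K := K) (ε := 0)
      (hVcont.continuousOn) hslope (le_of_eq hV0) bound
    intro x hx
    have hx0 := this x hx
    rwa [gronwallBound_ε0_δ0] at hx0
  -- conclude
  intro t ht i
  have hVt : V t ≤ 0 := key t ht t ⟨ht, le_refl t⟩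
  have hle : g t i ^ 2 + h t i ^ 2 ≤ V t := by
    apply Finset.single_le_sum (f := fun i => g t i ^ 2 + h t i ^ 2)
      (fun j _ => by positivity) (Finset.mem_univ i)
  have hg0 : g t i = 0 := by nlinarith [sq_nonneg (g t i), sq_nonneg (h t i), hgnn t i]
  have hh0 : h t i = 0 := by nlinarith [sq_nonneg (g t i), sq_nonneg (h t i), hhnn t i]
  constructor
  · have := hgle t i; rw [hg0] at this; linarith
  · have := hhle t i; rw [hh0] at this; linarith
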